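/- arXiv:1912.07673 — 8 statements merged into one kernel-verified Lean document; each statement's English description precedes it below -/
import Mathlib

section
/- (Mean-shift monotonicity.) Let n ≥ 1, d ≥ 1, p₁,…,pₙ ∈ ℝ^d, and y ∈ ℝ^d. Define the mean-shift update y' = (Σ_{i=1}^n pᵢ · exp(−‖y−pᵢ‖²)) / (Σ_{i=1}^n exp(−‖y−pᵢ‖²)). Then G_P(y') ≥ G_P(y). -/
/-!
Write `wᵢ = exp (-‖y - pᵢ‖²)` and `W = ∑ wᵢ`, so that `y'` is the `w`-weighted mean of the `pᵢ`.
Convexity of `exp` gives `exp (-‖y' - pᵢ‖²) ≥ wᵢ (1 + ‖y - pᵢ‖² - ‖y' - pᵢ‖²)`, and by the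
parallel axis theorem `∑ wᵢ (‖y - pᵢ‖² - ‖y' - pᵢ‖²) = W ‖y - y'‖² ≥ 0`.
-/

open Finset Real

open scoped RealInnerProductSpace

section WeightedMean

variable {ι E : Type*} [NormedAddCommGroup E] [InnerProductSpace ℝ E]

theorem sum_mul_norm_sub_sq_eq_of_sum_smul_eq (s : Finset ι) (w : ι → ℝ) (p : ι → E) {m : E}
    (hm : ∑ i ∈ s, w i • p i = (∑ i ∈ s, w i) • m) (x : E) :
    ∑ i ∈ s, w i * ‖x - p i‖ ^ 2 =
      ∑ i ∈ s, w i * ‖m - p i‖ ^ 2 + (∑ i ∈ s, w i) * ‖x - m‖ ^ 2 := by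
  have hcross : ∑ i ∈ s, w i * ⟪x - m, m - p i⟫ = 0 := by
    simp_rw [← real_inner_smul_right, ← inner_sum, smul_sub, sum_sub_distrib, ← sum_smul, hm,
      sub_self, inner_zero_right]
  calc ∑ i ∈ s, w i * ‖x - p i‖ ^ 2
      = ∑ i ∈ s, (w i * ‖m - p i‖ ^ 2 + w i * ‖x - m‖ ^ 2 + 2 * (w i * ⟪x - m, m - p i⟫)) := by
        refine sum_congr rfl fun i _ => ?_
        rw [← sub_add_sub_cancel x m (p i), norm_add_sq_real]
        ring
    _ = _ := by rw [sum_add_distrib, sum_add_distrib, ← mul_sum, hcross, ← sum_mul]; ring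

theorem exp_mul_sub_add_one_le_exp (a b : ℝ) : exp a * (b - a + 1) ≤ exp b := by
  calc exp a * (b - a + 1) ≤ exp a * exp (b - a) :=
        mul_le_mul_of_nonneg_left (add_one_le_exp _) (exp_pos a).le
    _ = exp b := by rw [← exp_add, add_sub_cancel]

theorem sum_exp_neg_norm_sub_sq_add_le_of_sum_smul_eq (s : Finset ι) (p : ι → E) {y y' : E}
    (hy' : ∑ i ∈ s, exp (-‖y - p i‖ ^ 2) • p i = (∑ i ∈ s, exp (-‖y - p i‖ ^ 2)) • y') :
    ∑ i ∈ s, exp (-‖y - p i‖ ^ 2) + (∑ i ∈ s, exp (-‖y - p i‖ ^ 2)) * ‖y - y'‖ ^ 2 ≤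
      ∑ i ∈ s, exp (-‖y' - p i‖ ^ 2) := by
  set w : ι → ℝ := fun i => exp (-‖y - p i‖ ^ 2)
  have hshift :
      ∑ i ∈ s, w i * (‖y - p i‖ ^ 2 - ‖y' - p i‖ ^ 2) = (∑ i ∈ s, w i) * ‖y - y'‖ ^ 2 := by
    simp_rw [mul_sub, sum_sub_distrib, sum_mul_norm_sub_sq_eq_of_sum_smul_eq s w p hy' y]
    ring
  calc ∑ i ∈ s, w i + (∑ i ∈ s, w i) * ‖y - y'‖ ^ 2
      = ∑ i ∈ s, w i * (-‖y' - p i‖ ^ 2 - -‖y - p i‖ ^ 2 + 1) := by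
        rw [← hshift, ← sum_add_distrib]
        exact sum_congr rfl fun i _ => by ring
    _ ≤ ∑ i ∈ s, exp (-‖y' - p i‖ ^ 2) :=
        sum_le_sum fun i _ => exp_mul_sub_add_one_le_exp _ _

end WeightedMean

theorem stmt_1_general (n d : ℕ) (hn : 1 ≤ n)
    (p : Fin n → EuclideanSpace ℝ (Fin d)) (y y' : EuclideanSpace ℝ (Fin d))
    (hy' : y' = (∑ i, Real.exp (-‖y - p i‖ ^ 2))⁻¹ •
      ∑ i, Real.exp (-‖y - p i‖ ^ 2) • p i) :
    ∑ i, Real.exp (-‖y' - p i‖ ^ 2) ≥ ∑ i, Real.exp (-‖y - p i‖ ^ 2) := by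
  have : NeZero n := ⟨by omega⟩
  have hW : 0 < ∑ i, exp (-‖y - p i‖ ^ 2) := sum_pos (fun i _ => exp_pos _) univ_nonempty
  have hmean := sum_exp_neg_norm_sub_sq_add_le_of_sum_smul_eq univ p
    (y' := y') (by rw [hy', smul_inv_smul₀ hW.ne'])
  exact (le_add_of_nonneg_right (by positivity)).trans hmean

theorem stmt_1 (n d : ℕ) (hn : 1 ≤ n) (hd : 1 ≤ d)
    (p : Fin n → EuclideanSpace ℝ (Fin d)) (y y' : EuclideanSpace ℝ (Fin d))
    (hy' : y' = (∑ i, Real.exp (-‖y - p i‖ ^ 2))⁻¹ •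
      ∑ i, Real.exp (-‖y - p i‖ ^ 2) • p i) :
    ∑ i, Real.exp (-‖y' - p i‖ ^ 2) ≥ ∑ i, Real.exp (-‖y - p i‖ ^ 2) :=
  stmt_1_general n d hn p y y' hy'
end

section
/- (Quantitative mean-shift improvement.) Let n ≥ 1, d ≥ 1, p₁,…,pₙ ∈ ℝ^d, and y ∈ ℝ^d. Define y' = (Σ_{i=1}^n pᵢ · exp(−‖y−pᵢ‖²)) / (Σ_{i=1}^n exp(−‖y−pᵢ‖²)). Then G_P(y') − G_P(y) ≥ G_P(y) · ‖y' − y‖². -/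
/-!
Write `x i = y - p i`, `v = y' - y` and `w i = exp (-‖x i‖²)`. Then
`exp (-‖x i + v‖²) = w i * exp (-2⟪v, x i⟫ - ‖v‖²) ≥ w i * (1 - 2⟪v, x i⟫ - ‖v‖²)`,
and since `y'` is the `w`-weighted mean of the points, `∑ w i • x i = -G(y) • v`.
Summing, the linear term contributes `2 G(y) ‖v‖²`, so `G(y') ≥ G(y) + G(y) ‖v‖²`.
-/

open Real
open scoped RealInnerProductSpace

section

variable {E : Type*} [NormedAddCommGroup E] [InnerProductSpace ℝ E] {ι : Type*} [Fintype ι]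

noncomputable def gaussianKDE (p : ι → E) (x : E) : ℝ :=
  ∑ i, exp (-‖x - p i‖ ^ 2)

noncomputable def meanShift (p : ι → E) (y : E) : E :=
  (gaussianKDE p y)⁻¹ • ∑ i, exp (-‖y - p i‖ ^ 2) • p i

lemma sum_smul_sub_eq_smul_sub_weightedMean {w : ι → ℝ} (hw : ∀ i, 0 ≤ w i) (p : ι → E)
    (y : E) :
    ∑ i, w i • (y - p i) = (∑ i, w i) • (y - (∑ i, w i)⁻¹ • ∑ i, w i • p i) := by
  have hmass : (∑ i, w i) • ((∑ i, w i)⁻¹ • ∑ i, w i • p i) = ∑ i, w i • p i := by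
    -- A vanishing total weight forces every weight to vanish, so `0⁻¹ = 0` does no harm.
    by_cases hW : ∑ i, w i = 0
    · have hzero : ∀ i, w i = 0 := by
        simpa [Finset.sum_eq_zero_iff_of_nonneg fun i _ => hw i] using hW
      simp [hzero]
    · exact smul_inv_smul₀ hW _
  simp only [smul_sub, hmass, Finset.sum_sub_distrib, Finset.sum_smul]

lemma exp_neg_norm_sq_mul_le (x v : E) :
    exp (-‖x‖ ^ 2) * (1 - 2 * ⟪v, x⟫ - ‖v‖ ^ 2) ≤ exp (-‖x + v‖ ^ 2) := by
  have hsplit : -‖x + v‖ ^ 2 = -‖x‖ ^ 2 + (-2 * ⟪v, x⟫ - ‖v‖ ^ 2) := by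
    rw [norm_add_sq_real, real_inner_comm]
    ring
  rw [hsplit, exp_add]
  gcongr
  linarith [add_one_le_exp (-2 * ⟪v, x⟫ - ‖v‖ ^ 2)]

theorem gaussianKDE_mul_norm_meanShift_sub_sq_le (p : ι → E) (y : E) :
    gaussianKDE p y * ‖meanShift p y - y‖ ^ 2 ≤
      gaussianKDE p (meanShift p y) - gaussianKDE p y := by
  set w : ι → ℝ := fun i => exp (-‖y - p i‖ ^ 2)
  set v := meanShift p y - y
  have hmean : ∑ i, w i • (y - p i) = -(gaussianKDE p y • v) := by
    rw [sum_smul_sub_eq_smul_sub_weightedMean (fun i => (exp_pos _).le), ← smul_neg, neg_sub]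
    rfl
  have hlin : ∑ i, w i * ⟪v, y - p i⟫ = -(gaussianKDE p y * ‖v‖ ^ 2) := by
    simp_rw [← real_inner_smul_right, ← inner_sum, hmean, inner_neg_right,
      real_inner_smul_right, real_inner_self_eq_norm_sq]
  have hpt : ∀ i, w i * (1 - 2 * ⟪v, y - p i⟫ - ‖v‖ ^ 2) ≤ exp (-‖meanShift p y - p i‖ ^ 2) :=
    fun i => by simpa [v] using exp_neg_norm_sq_mul_le (y - p i) v
  calc gaussianKDE p y * ‖v‖ ^ 2
      = ∑ i, w i * (1 - 2 * ⟪v, y - p i⟫ - ‖v‖ ^ 2) - gaussianKDE p y := by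
        simp only [mul_sub, mul_one, Finset.sum_sub_distrib, mul_left_comm _ (2 : ℝ),
          ← Finset.mul_sum, ← Finset.sum_mul, hlin]
        simp only [gaussianKDE, w]
        ring
    _ ≤ gaussianKDE p (meanShift p y) - gaussianKDE p y :=
        sub_le_sub_right (Finset.sum_le_sum fun i _ => hpt i) _

end

theorem stmt_2_general (n d : ℕ)
    (p : Fin n → EuclideanSpace ℝ (Fin d)) (y y' : EuclideanSpace ℝ (Fin d))
    (hy' : y' = (∑ i, Real.exp (-‖y - p i‖ ^ 2))⁻¹ •
      ∑ i, Real.exp (-‖y - p i‖ ^ 2) • p i) :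
    ∑ i, Real.exp (-‖y' - p i‖ ^ 2) - ∑ i, Real.exp (-‖y - p i‖ ^ 2) ≥
      (∑ i, Real.exp (-‖y - p i‖ ^ 2)) * ‖y' - y‖ ^ 2 := by
  subst hy'
  exact gaussianKDE_mul_norm_meanShift_sub_sq_le p y

theorem stmt_2 (n d : ℕ) (hn : 1 ≤ n) (hd : 1 ≤ d)
    (p : Fin n → EuclideanSpace ℝ (Fin d)) (y y' : EuclideanSpace ℝ (Fin d))
    (hy' : y' = (∑ i, Real.exp (-‖y - p i‖ ^ 2))⁻¹ •
      ∑ i, Real.exp (-‖y - p i‖ ^ 2) • p i) :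
    ∑ i, Real.exp (-‖y' - p i‖ ^ 2) - ∑ i, Real.exp (-‖y - p i‖ ^ 2) ≥
      (∑ i, Real.exp (-‖y - p i‖ ^ 2)) * ‖y' - y‖ ^ 2 :=
  stmt_2_general n d p y y' hy'
end

section
/- (Projection preserves KDE value from below; deterministic core of the left side of Lemma 3.2.) Let n ≥ 1, d, m ≥ 1, 0 < ε ≤ 1, 0 < ρ ≤ 1, and set γ = ε / (4 · log(4/(ερ))). Let p₁,…,pₙ ∈ ℝ^d and x ∈ ℝ^d satisfy Σ_{i=1}^n exp(−‖x−pᵢ‖²) ≥ nρ. Let q₁,…,qₙ ∈ ℝ^m and y ∈ ℝ^m satisfy ‖y − qᵢ‖² ≤ (1+γ)·‖x − pᵢ‖² for every i. Then Σ_{i=1}^n exp(−‖y−qᵢ‖²) ≥ (1 − ε/2) · Σ_{i=1}^n exp(−‖x−pᵢ‖²). -/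
open scoped BigOperators

theorem stmt_3 (n d m : ℕ) (hn : 1 ≤ n) (hd : 1 ≤ d) (hm : 1 ≤ m)
    (ε ρ : ℝ) (hε0 : 0 < ε) (hε1 : ε ≤ 1) (hρ0 : 0 < ρ) (hρ1 : ρ ≤ 1)
    (γ : ℝ) (hγ : γ = ε / (4 * Real.log (4 / (ε * ρ))))
    (p : Fin n → EuclideanSpace ℝ (Fin d)) (x : EuclideanSpace ℝ (Fin d))
    (hx : (n : ℝ) * ρ ≤ ∑ i, Real.exp (-‖x - p i‖ ^ 2))
    (q : Fin n → EuclideanSpace ℝ (Fin m)) (y : EuclideanSpace ℝ (Fin m))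
    (hq : ∀ i, ‖y - q i‖ ^ 2 ≤ (1 + γ) * ‖x - p i‖ ^ 2) :
    ∑ i, Real.exp (-‖y - q i‖ ^ 2) ≥ (1 - ε / 2) * ∑ i, Real.exp (-‖x - p i‖ ^ 2) := by
  set L := Real.log (4 / (ε * ρ)) with hLdef
  have hερ : 0 < ε * ρ := mul_pos hε0 hρ0
  have hερ1 : ε * ρ ≤ 1 := by nlinarith
  have hL4 : (4 : ℝ) ≤ 4 / (ε * ρ) := by
    rw [le_div_iff₀ hερ]; nlinarith
  have hLpos : 0 < L := by
    rw [hLdef]; apply Real.log_pos; linarith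
  have hγL : γ * L = ε / 4 := by
    rw [hγ]; field_simp
  have hγ0 : 0 ≤ γ := by rw [hγ]; positivity
  have hexpL : Real.exp (-L) = ε * ρ / 4 := by
    rw [hLdef, Real.exp_neg, Real.exp_log (by positivity)]
    field_simp
  set S := ∑ i, Real.exp (-‖x - p i‖ ^ 2) with hSdef
  have hS0 : 0 ≤ S := Finset.sum_nonneg fun i _ => (Real.exp_pos _).le
  set A := Finset.univ.filter (fun i => ‖x - p i‖ ^ 2 ≤ L) with hAdef
  have hsplit : ∑ i ∈ A, Real.exp (-‖x - p i‖ ^ 2)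
      + ∑ i ∈ Aᶜ, Real.exp (-‖x - p i‖ ^ 2) = S :=
    Finset.sum_add_sum_compl A _
  have hfar : ∑ i ∈ Aᶜ, Real.exp (-‖x - p i‖ ^ 2) ≤ (ε / 4) * S := by
    calc ∑ i ∈ Aᶜ, Real.exp (-‖x - p i‖ ^ 2)
        ≤ ∑ _i ∈ Aᶜ, (ε * ρ / 4) := by
          apply Finset.sum_le_sum
          intro i hi
          simp only [hAdef, Finset.mem_compl, Finset.mem_filter, Finset.mem_univ,
            true_and, not_le] at hi
          rw [← hexpL]
          exact Real.exp_le_exp.mpr (by linarith)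
      _ = (Aᶜ.card : ℝ) * (ε * ρ / 4) := by rw [Finset.sum_const, nsmul_eq_mul]
      _ ≤ (n : ℝ) * (ε * ρ / 4) := by
          gcongr
          exact_mod_cast (Finset.card_le_univ _).trans (by simp)
      _ = (ε / 4) * ((n : ℝ) * ρ) := by ring
      _ ≤ (ε / 4) * S := by
          apply mul_le_mul_of_nonneg_left hx (by linarith)
  have hnear : (1 - ε / 4) * S ≤ ∑ i ∈ A, Real.exp (-‖x - p i‖ ^ 2) := by
    nlinarith [hsplit, hfar]
  have hpt : ∀ i ∈ A, (1 - ε / 4) * Real.exp (-‖x - p i‖ ^ 2)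
      ≤ Real.exp (-‖y - q i‖ ^ 2) := by
    intro i hi
    simp only [hAdef, Finset.mem_filter, Finset.mem_univ, true_and] at hi
    have h1 : Real.exp (-((1 + γ) * ‖x - p i‖ ^ 2)) ≤ Real.exp (-‖y - q i‖ ^ 2) :=
      Real.exp_le_exp.mpr (by linarith [hq i])
    have h2 : Real.exp (-((1 + γ) * ‖x - p i‖ ^ 2))
        = Real.exp (-(γ * ‖x - p i‖ ^ 2)) * Real.exp (-‖x - p i‖ ^ 2) := by
      rw [← Real.exp_add]; ring_nf
    have h3 : (1 - ε / 4) ≤ Real.exp (-(γ * ‖x - p i‖ ^ 2)) := by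
      have hb : -(γ * L) ≤ -(γ * ‖x - p i‖ ^ 2) := by
        have := mul_le_mul_of_nonneg_left hi hγ0
        linarith
      calc (1 - ε / 4) = -(γ * L) + 1 := by rw [hγL]; ring
        _ ≤ Real.exp (-(γ * L)) := Real.add_one_le_exp _
        _ ≤ _ := Real.exp_le_exp.mpr hb
    nlinarith [Real.exp_pos (-‖x - p i‖ ^ 2), h1, h2, h3]
  have hstep : (1 - ε / 4) * ∑ i ∈ A, Real.exp (-‖x - p i‖ ^ 2)
      ≤ ∑ i, Real.exp (-‖y - q i‖ ^ 2) := by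
    rw [Finset.mul_sum]
    calc ∑ i ∈ A, (1 - ε / 4) * Real.exp (-‖x - p i‖ ^ 2)
        ≤ ∑ i ∈ A, Real.exp (-‖y - q i‖ ^ 2) := Finset.sum_le_sum hpt
      _ ≤ ∑ i, Real.exp (-‖y - q i‖ ^ 2) :=
          Finset.sum_le_sum_of_subset_of_nonneg (Finset.subset_univ _)
            (fun i _ _ => (Real.exp_pos _).le)
  have hε4 : 0 ≤ 1 - ε / 4 := by linarith
  nlinarith [mul_le_mul_of_nonneg_left hnear hε4, hstep, hS0, mul_nonneg (sq_nonneg ε) hS0]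
end

section
/- (Kirszbraun extension theorem for Euclidean spaces.) Let z, w ≥ 1, let S ⊆ ℝ^z, let L ≥ 0, and let f : S → ℝ^w satisfy ‖f(x) − f(y)‖ ≤ L·‖x − y‖ for all x, y ∈ S. Then there exists a function f̃ : ℝ^z → ℝ^w such that f̃(x) = f(x) for all x ∈ S and ‖f̃(x) − f̃(y)‖ ≤ L·‖x − y‖ for all x, y ∈ ℝ^z. -/
/-! For finitely many constraints `‖y - v i‖ ≤ L * ‖x - s i‖`, minimise
`ψ y = max_i (‖y - v i‖² - L² ‖x - s i‖²)`. At a minimiser `y₀` no direction decreases all the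
active terms at once, so by separation `y₀ = ∑ w i • v i` is a convex combination of active
values. The weighted variance identity then gives
  `∑ w i ‖y₀ - v i‖² = ½ ∑∑ w i w j ‖v i - v j‖²`
    `≤ ½ L² ∑∑ w i w j ‖s i - s j‖² ≤ L² ∑ w i ‖x - s i‖²`,
i.e. `min ψ ≤ 0`. Compactness of closed balls in the finite-dimensional target passes to
arbitrarily many constraints, and Zorn's lemma on Lipschitz relations extends the map one point at
a time. -/

open Filter Finset Set Topology RealInnerProductSpace

section InnerProductSpace

variable {ι : Type*} {E F : Type*} [NormedAddCommGroup E] [InnerProductSpace ℝ E]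
  [NormedAddCommGroup F] [InnerProductSpace ℝ F]

theorem sum_sum_mul_norm_sub_sq (t : Finset ι) {w : ι → ℝ} (hw : ∑ i ∈ t, w i = 1) (u : ι → F) :
    ∑ i ∈ t, ∑ j ∈ t, w i * w j * ‖u i - u j‖ ^ 2 =
      2 * (∑ i ∈ t, w i * ‖u i‖ ^ 2 - ‖∑ i ∈ t, w i • u i‖ ^ 2) := by
  have hgram : ‖∑ i ∈ t, w i • u i‖ ^ 2 = ∑ i ∈ t, ∑ j ∈ t, w i * w j * ⟪u i, u j⟫ := by
    simp only [← real_inner_self_eq_norm_sq, sum_inner, inner_sum, real_inner_smul_left,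
      real_inner_smul_right]
    exact sum_congr rfl fun i _ => sum_congr rfl fun j _ => by rw [real_inner_comm]; ring
  have hdiag : ∑ i ∈ t, ∑ j ∈ t, w i * w j * ‖u i‖ ^ 2 = ∑ i ∈ t, w i * ‖u i‖ ^ 2 :=
    sum_congr rfl fun i _ => by rw [← sum_mul, ← mul_sum, hw, mul_one]
  calc ∑ i ∈ t, ∑ j ∈ t, w i * w j * ‖u i - u j‖ ^ 2
      = ∑ i ∈ t, ∑ j ∈ t, (w i * w j * ‖u i‖ ^ 2 + w j * w i * ‖u j‖ ^ 2
          - 2 * (w i * w j * ⟪u i, u j⟫)) :=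
        sum_congr rfl fun i _ => sum_congr rfl fun j _ => by rw [norm_sub_sq_real]; ring
    _ = _ := by
      simp only [sum_sub_distrib, sum_add_distrib, ← mul_sum]
      rw [sum_comm (f := fun i j => w j * w i * ‖u j‖ ^ 2), hdiag, hgram]
      ring

theorem sum_mul_norm_sum_smul_sub_sq_le (t : Finset ι) {w : ι → ℝ} (hw₀ : ∀ i ∈ t, 0 ≤ w i)
    (hw₁ : ∑ i ∈ t, w i = 1) {s : ι → E} {v : ι → F} {L : ℝ}
    (hsv : ∀ i ∈ t, ∀ j ∈ t, ‖v i - v j‖ ≤ L * ‖s i - s j‖) (x : E) :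
    ∑ i ∈ t, w i * ‖∑ j ∈ t, w j • v j - v i‖ ^ 2 ≤ L ^ 2 * ∑ i ∈ t, w i * ‖x - s i‖ ^ 2 := by
  set c := ∑ j ∈ t, w j • v j
  have hv := sum_sum_mul_norm_sub_sq t hw₁ fun i => v i - c
  have hs := sum_sum_mul_norm_sub_sq t hw₁ fun i => x - s i
  have hc : ∑ i ∈ t, w i • (v i - c) = 0 := by
    simp only [smul_sub, sum_sub_distrib, ← sum_smul, hw₁, one_smul, c, sub_self]
  simp only [sub_sub_sub_cancel_right, sub_sub_sub_cancel_left, hc, norm_zero] at hv hs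
  have hlip : ∑ i ∈ t, ∑ j ∈ t, w i * w j * ‖v i - v j‖ ^ 2 ≤
      L ^ 2 * ∑ i ∈ t, ∑ j ∈ t, w i * w j * ‖s j - s i‖ ^ 2 := by
    simp only [mul_sum]
    refine sum_le_sum fun i hi => sum_le_sum fun j hj => ?_
    rw [norm_sub_rev (s j), mul_left_comm, ← mul_pow]
    exact mul_le_mul_of_nonneg_left (pow_le_pow_left₀ (norm_nonneg _) (hsv i hi j hj) 2)
      (mul_nonneg (hw₀ i hi) (hw₀ j hj))
  simp only [norm_sub_rev c]
  nlinarith [sq_nonneg L, sq_nonneg ‖∑ i ∈ t, w i • (x - s i)‖]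

theorem exists_inner_sub_neg_of_notMem [CompleteSpace F] {K : Set F} (hK : Convex ℝ K)
    (hKc : IsClosed K) {y : F} (hy : y ∉ K) : ∃ d : F, ∀ v ∈ K, ⟪y - v, d⟫ < 0 := by
  obtain ⟨φ, u, hφy, hφK⟩ := geometric_hahn_banach_point_closed hK hKc hy
  refine ⟨(InnerProductSpace.toDual ℝ F).symm φ, fun v hv => ?_⟩
  rw [real_inner_comm, InnerProductSpace.toDual_symm_apply, map_sub]
  linarith [hφK v hv]

theorem eventually_norm_add_smul_sub_sq_lt {y d v : F} {r : ℝ}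
    (h : ‖y - v‖ ^ 2 < r ∨ ‖y - v‖ ^ 2 ≤ r ∧ ⟪y - v, d⟫ < 0) :
    ∀ᶠ τ in 𝓝[>] (0 : ℝ), ‖y + τ • d - v‖ ^ 2 < r := by
  rcases h with hlt | ⟨hle, hneg⟩
  · refine nhdsWithin_le_nhds (Tendsto.eventually_lt_const hlt ?_)
    simpa using ((by fun_prop : Continuous fun τ : ℝ => ‖y + τ • d - v‖ ^ 2).tendsto 0)
  · have hslope : ∀ᶠ τ in 𝓝 (0 : ℝ), 2 * ⟪y - v, d⟫ + τ * ‖d‖ ^ 2 < 0 := by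
      refine Tendsto.eventually_lt_const (mul_neg_of_pos_of_neg two_pos hneg) ?_
      have hcont : Continuous fun τ : ℝ => 2 * ⟪y - v, d⟫ + τ * ‖d‖ ^ 2 := by fun_prop
      simpa using hcont.tendsto 0
    filter_upwards [nhdsWithin_le_nhds hslope, self_mem_nhdsWithin] with τ hτ (hτ₀ : 0 < τ)
    have hexp : ‖y + τ • d - v‖ ^ 2 = ‖y - v‖ ^ 2 + τ * (2 * ⟪y - v, d⟫ + τ * ‖d‖ ^ 2) := by
      rw [add_sub_right_comm, norm_add_sq_real, real_inner_smul_right, norm_smul,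
        Real.norm_of_nonneg hτ₀.le]
      ring
    nlinarith

variable [FiniteDimensional ℝ F]

theorem exists_forall_sup'_norm_sub_sq_sub_le {t : Finset ι} (ht : t.Nonempty) (v : ι → F)
    (c : ι → ℝ) : ∃ y₀ : F, ∀ y : F,
      t.sup' ht (fun i => ‖y₀ - v i‖ ^ 2 - c i) ≤ t.sup' ht (fun i => ‖y - v i‖ ^ 2 - c i) := by
  obtain ⟨i₀, hi₀⟩ := ht
  refine Continuous.exists_forall_le (Continuous.finset_sup'_apply _ fun i _ => by fun_prop) ?_
  refine tendsto_atTop_mono (fun y => le_sup' (fun i => ‖y - v i‖ ^ 2 - c i) hi₀) ?_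
  refine tendsto_atTop_add_const_right _ _ ((tendsto_pow_atTop two_ne_zero).comp ?_)
  exact tendsto_atTop_mono (fun y => norm_sub_norm_le y (v i₀))
    (tendsto_atTop_add_const_right _ _ tendsto_norm_cocompact_atTop)

theorem exists_forall_mem_norm_sub_le (t : Finset ι) {s : ι → E} {v : ι → F} {L : ℝ}
    (hL : 0 ≤ L) (hsv : ∀ i ∈ t, ∀ j ∈ t, ‖v i - v j‖ ≤ L * ‖s i - s j‖) (x : E) :
    ∃ y : F, ∀ i ∈ t, ‖y - v i‖ ≤ L * ‖x - s i‖ := by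
  classical
  rcases t.eq_empty_or_nonempty with rfl | ht
  · simp
  set c : ι → ℝ := fun i => L ^ 2 * ‖x - s i‖ ^ 2
  obtain ⟨y₀, hy₀⟩ := exists_forall_sup'_norm_sub_sq_sub_le ht v c
  set m := t.sup' ht fun i => ‖y₀ - v i‖ ^ 2 - c i
  have hle : ∀ i ∈ t, ‖y₀ - v i‖ ^ 2 ≤ m + c i := fun i hi => by
    linarith [le_sup' (fun i => ‖y₀ - v i‖ ^ 2 - c i) hi]
  set active := {i | i ∈ t ∧ ‖y₀ - v i‖ ^ 2 = m + c i}
  have hhull : y₀ ∈ convexHull ℝ (v '' active) := by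
    by_contra hy
    have hfin : (v '' active).Finite := (t.finite_toSet.subset fun i hi => hi.1).image v
    obtain ⟨d, hd⟩ := exists_inner_sub_neg_of_notMem (convex_convexHull ℝ _)
      (hfin.isClosed_convexHull ℝ) hy
    have hdescent : ∀ᶠ τ in 𝓝[>] (0 : ℝ), ∀ i ∈ t, ‖y₀ + τ • d - v i‖ ^ 2 - c i < m := by
      refine (eventually_all_finset t).2 fun i hi => ?_
      refine (eventually_norm_add_smul_sub_sq_lt ?_).mono fun τ hτ => sub_lt_iff_lt_add.2 hτ
      refine (hle i hi).lt_or_eq.imp id fun heq => ⟨heq.le, hd _ ?_⟩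
      exact subset_convexHull ℝ _ ⟨i, ⟨hi, heq⟩, rfl⟩
    obtain ⟨τ, hτ⟩ := hdescent.exists
    exact (hy₀ (y₀ + τ • d)).not_gt ((sup'_lt_iff ht).2 hτ)
  obtain ⟨κ, _, w, z, hw₀, hw₁, hz, hy₀_eq⟩ := mem_convexHull_iff_exists_fintype.1 hhull
  choose σ hσ hσz using hz
  simp only [← hσz] at hy₀_eq
  have hm : m ≤ 0 := by
    have key := sum_mul_norm_sum_smul_sub_sq_le univ (fun k _ => hw₀ k) hw₁
      (fun k _ l _ => hsv (σ k) (hσ k).1 (σ l) (hσ l).1) x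
    simp only [hy₀_eq, fun k => (hσ k).2, c, mul_add, sum_add_distrib, ← sum_mul, hw₁,
      mul_sum, mul_left_comm (w _)] at key
    linarith
  refine ⟨y₀, fun i hi => ?_⟩
  rw [← pow_le_pow_iff_left₀ (norm_nonneg _) (by positivity) two_ne_zero, mul_pow]
  linarith [hle i hi]

theorem exists_forall_norm_sub_le {s : ι → E} {v : ι → F} {L : ℝ} (hL : 0 ≤ L)
    (hsv : ∀ i j, ‖v i - v j‖ ≤ L * ‖s i - s j‖) (x : E) :
    ∃ y : F, ∀ i, ‖y - v i‖ ≤ L * ‖x - s i‖ := by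
  classical
  rcases isEmpty_or_nonempty ι with hι | ⟨⟨i₀⟩⟩
  · exact ⟨0, isEmptyElim⟩
  have hball : ∀ y i, y ∈ Metric.closedBall (v i) (L * ‖x - s i‖) ↔ ‖y - v i‖ ≤ L * ‖x - s i‖ :=
    fun y i => by rw [Metric.mem_closedBall, dist_eq_norm]
  obtain ⟨y, -, hy⟩ := (isCompact_closedBall (v i₀) (L * ‖x - s i₀‖)).inter_iInter_nonempty
    (fun i => Metric.closedBall (v i) (L * ‖x - s i‖)) (fun _ => Metric.isClosed_closedBall)
    fun u => by
      obtain ⟨y, hy⟩ := exists_forall_mem_norm_sub_le (insert i₀ u) hL (fun i _ j _ => hsv i j) x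
      exact ⟨y, (hball y i₀).2 (hy i₀ (mem_insert_self _ _)),
        mem_iInter₂.2 fun i hi => (hball y i).2 (hy i (mem_insert_of_mem hi))⟩
  exact ⟨y, fun i => (hball y i).1 (mem_iInter.1 hy i)⟩

end InnerProductSpace

section LipschitzRel

variable {E F : Type*} [SeminormedAddCommGroup E] [NormedAddCommGroup F]

def IsLipschitzRel (L : ℝ) (G : Set (E × F)) : Prop :=
  ∀ p ∈ G, ∀ q ∈ G, ‖p.2 - q.2‖ ≤ L * ‖p.1 - q.1‖

theorem isLipschitzRel_sUnion {L : ℝ} {c : Set (Set (E × F))} (hc : IsChain (· ⊆ ·) c)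
    (hG : ∀ G ∈ c, IsLipschitzRel L G) : IsLipschitzRel L (⋃₀ c) := by
  rintro p ⟨G₁, hG₁, hp⟩ q ⟨G₂, hG₂, hq⟩
  rcases hc.total hG₁ hG₂ with h | h
  · exact hG G₂ hG₂ p (h hp) q hq
  · exact hG G₁ hG₁ p hp q (h hq)

theorem IsLipschitzRel.insert {L : ℝ} {G : Set (E × F)} (hG : IsLipschitzRel L G) {x : E} {y : F}
    (hxy : ∀ p ∈ G, ‖y - p.2‖ ≤ L * ‖x - p.1‖) : IsLipschitzRel L (insert (x, y) G) := by
  rintro p (rfl | hp) q (rfl | hq)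
  · simp
  · exact hxy q hq
  · rw [norm_sub_rev, norm_sub_rev p.1]
    exact hxy p hp
  · exact hG p hp q hq

theorem IsLipschitzRel.eq_of_mem {L : ℝ} {G : Set (E × F)} (hG : IsLipschitzRel L G) {x : E}
    {y₁ y₂ : F} (h₁ : (x, y₁) ∈ G) (h₂ : (x, y₂) ∈ G) : y₁ = y₂ := by
  simpa [sub_eq_zero] using hG _ h₁ _ h₂

end LipschitzRel

theorem exists_extension_norm_sub_le {E F : Type*} [NormedAddCommGroup E] [InnerProductSpace ℝ E]
    [NormedAddCommGroup F] [InnerProductSpace ℝ F] [FiniteDimensional ℝ F] (S : Set E)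
    (f : E → F) {L : ℝ} (hL : 0 ≤ L) (hf : ∀ x ∈ S, ∀ y ∈ S, ‖f x - f y‖ ≤ L * ‖x - y‖) :
    ∃ g : E → F, (∀ x ∈ S, g x = f x) ∧ ∀ x y, ‖g x - g y‖ ≤ L * ‖x - y‖ := by
  obtain ⟨M, hfM, hM⟩ := zorn_subset_nonempty {G : Set (E × F) | IsLipschitzRel L G}
    (fun c hc hchain _ => ⟨⋃₀ c, isLipschitzRel_sUnion hchain hc, fun _ => subset_sUnion_of_mem⟩)
    ((fun x => (x, f x)) '' S) (by rintro _ ⟨x, hx, rfl⟩ _ ⟨y, hy, rfl⟩; exact hf x hx y hy)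
  have htotal : ∀ x, ∃ y, (x, y) ∈ M := fun x => by
    obtain ⟨y, hy⟩ := exists_forall_norm_sub_le (s := fun p : M => p.1.1) (v := fun p : M => p.1.2)
      hL (fun p q => hM.1 _ p.2 _ q.2) x
    exact ⟨y, hM.mem_of_prop_insert (hM.1.insert fun p hp => hy ⟨p, hp⟩)⟩
  choose g hg using htotal
  exact ⟨g, fun x hx => hM.1.eq_of_mem (hg x) (hfM ⟨x, hx, rfl⟩), fun x y => hM.1 _ (hg x) _ (hg y)⟩

theorem stmt_5_general (z w : ℕ)
    (S : Set (EuclideanSpace ℝ (Fin z))) (L : ℝ) (hL : 0 ≤ L)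
    (f : EuclideanSpace ℝ (Fin z) → EuclideanSpace ℝ (Fin w))
    (hf : ∀ x ∈ S, ∀ y ∈ S, ‖f x - f y‖ ≤ L * ‖x - y‖) :
    ∃ g : EuclideanSpace ℝ (Fin z) → EuclideanSpace ℝ (Fin w),
      (∀ x ∈ S, g x = f x) ∧ ∀ x y, ‖g x - g y‖ ≤ L * ‖x - y‖ :=
  exists_extension_norm_sub_le S f hL hf

theorem stmt_5 (z w : ℕ) (hz : 1 ≤ z) (hw : 1 ≤ w)
    (S : Set (EuclideanSpace ℝ (Fin z))) (L : ℝ) (hL : 0 ≤ L)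
    (f : EuclideanSpace ℝ (Fin z) → EuclideanSpace ℝ (Fin w))
    (hf : ∀ x ∈ S, ∀ y ∈ S, ‖f x - f y‖ ≤ L * ‖x - y‖) :
    ∃ g : EuclideanSpace ℝ (Fin z) → EuclideanSpace ℝ (Fin w),
      (∀ x ∈ S, g x = f x) ∧ ∀ x y, ‖g x - g y‖ ≤ L * ‖x - y‖ :=
  stmt_5_general z w S L hL f hf
end

section
/- (Mean-shift pullback recovers the projected KDE value; core of the proof of Theorem 3.2.) Let n ≥ 1, d, m ≥ 1, let p₁,…,pₙ ∈ ℝ^d, let q₁,…,qₙ ∈ ℝ^m, and let x ∈ ℝ^m. Suppose there exists y ∈ ℝ^d such that ‖y − pᵢ‖ ≤ ‖x − qᵢ‖ for every i. Define x' = (Σ_{i=1}^n pᵢ · exp(−‖x−qᵢ‖²)) / (Σ_{i=1}^n exp(−‖x−qᵢ‖²)). Then Σ_{i=1}^n exp(−‖x'−pᵢ‖²) ≥ Σ_{i=1}^n exp(−‖x−qᵢ‖²). -/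
/-!
The weights `wᵢ = exp (-‖x - qᵢ‖²)` make `x'` the weighted centre of mass of the `pᵢ`, which
minimises `z ↦ ∑ wᵢ ‖z - pᵢ‖²`; comparing with the point `y` gives
`∑ wᵢ ‖x' - pᵢ‖² ≤ ∑ wᵢ ‖x - qᵢ‖²`. The tangent-line bound `exp (-b) ≥ exp (-a) (1 + a - b)`,
summed with `aᵢ = ‖x - qᵢ‖²` and `bᵢ = ‖x' - pᵢ‖²`, turns this into the claim.
-/

section CenterMass

variable {ι E : Type*} [NormedAddCommGroup E] [InnerProductSpace ℝ E]
  (s : Finset ι) (w : ι → ℝ) (p : ι → E)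

theorem Finset.sum_mul_norm_sub_sq_eq_centerMass_add (hw : ∑ i ∈ s, w i ≠ 0) (z : E) :
    ∑ i ∈ s, w i * ‖z - p i‖ ^ 2 =
      ∑ i ∈ s, w i * ‖s.centerMass w p - p i‖ ^ 2 +
        (∑ i ∈ s, w i) * ‖z - s.centerMass w p‖ ^ 2 := by
  set c := s.centerMass w p with hc_def
  have hc : ∑ i ∈ s, w i • p i = (∑ i ∈ s, w i) • c := by
    rw [hc_def, Finset.centerMass, smul_smul, mul_inv_cancel₀ hw, one_smul]
  have cross : ∑ i ∈ s, w i * inner ℝ (z - c) (c - p i) = 0 := by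
    simp_rw [← real_inner_smul_right, ← inner_sum, smul_sub, Finset.sum_sub_distrib,
      ← Finset.sum_smul, hc, sub_self, inner_zero_right]
  have split : ∀ i, w i * ‖z - p i‖ ^ 2 =
      w i * ‖c - p i‖ ^ 2 + w i * ‖z - c‖ ^ 2 + 2 * (w i * inner ℝ (z - c) (c - p i)) := by
    intro i
    rw [← sub_add_sub_cancel z c (p i), norm_add_sq_real]
    ring
  simp_rw [split, Finset.sum_add_distrib, ← Finset.mul_sum, cross, ← Finset.sum_mul]
  ring

theorem Finset.sum_mul_norm_centerMass_sub_sq_le (hw : ∀ i ∈ s, 0 ≤ w i) (z : E) :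
    ∑ i ∈ s, w i * ‖s.centerMass w p - p i‖ ^ 2 ≤ ∑ i ∈ s, w i * ‖z - p i‖ ^ 2 := by
  by_cases hW : ∑ i ∈ s, w i = 0
  · have hw0 := (Finset.sum_eq_zero_iff_of_nonneg hw).1 hW
    rw [Finset.sum_eq_zero fun i hi => by rw [hw0 i hi, zero_mul],
      Finset.sum_eq_zero fun i hi => by rw [hw0 i hi, zero_mul]]
  · rw [s.sum_mul_norm_sub_sq_eq_centerMass_add w p hW z]
    have hW_nonneg := Finset.sum_nonneg hw
    exact le_add_of_nonneg_right (by positivity)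

end CenterMass

theorem Real.exp_neg_mul_one_add_sub_le (a b : ℝ) : exp (-a) * (1 + (a - b)) ≤ exp (-b) := by
  calc exp (-a) * (1 + (a - b)) ≤ exp (-a) * exp (a - b) := by
        gcongr; linarith [add_one_le_exp (a - b)]
    _ = exp (-b) := by rw [← exp_add]; ring_nf

theorem Finset.sum_exp_neg_le_of_sum_mul_le {ι : Type*} (s : Finset ι) {a b : ι → ℝ}
    (h : ∑ i ∈ s, Real.exp (-a i) * b i ≤ ∑ i ∈ s, Real.exp (-a i) * a i) :
    ∑ i ∈ s, Real.exp (-a i) ≤ ∑ i ∈ s, Real.exp (-b i) := by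
  calc ∑ i ∈ s, Real.exp (-a i)
      ≤ ∑ i ∈ s, Real.exp (-a i) +
          (∑ i ∈ s, Real.exp (-a i) * a i - ∑ i ∈ s, Real.exp (-a i) * b i) := by linarith
    _ = ∑ i ∈ s, Real.exp (-a i) * (1 + (a i - b i)) := by
        simp only [mul_add, mul_sub, mul_one, Finset.sum_add_distrib, Finset.sum_sub_distrib]
    _ ≤ ∑ i ∈ s, Real.exp (-b i) :=
        Finset.sum_le_sum fun i _ => Real.exp_neg_mul_one_add_sub_le (a i) (b i)

theorem stmt_8_general (n d m : ℕ)
    (p : Fin n → EuclideanSpace ℝ (Fin d)) (q : Fin n → EuclideanSpace ℝ (Fin m))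
    (x : EuclideanSpace ℝ (Fin m))
    (hy : ∃ y : EuclideanSpace ℝ (Fin d), ∀ i, ‖y - p i‖ ≤ ‖x - q i‖)
    (x' : EuclideanSpace ℝ (Fin d))
    (hx' : x' = (∑ i, Real.exp (-‖x - q i‖ ^ 2))⁻¹ •
      ∑ i, Real.exp (-‖x - q i‖ ^ 2) • p i) :
    ∑ i, Real.exp (-‖x' - p i‖ ^ 2) ≥ ∑ i, Real.exp (-‖x - q i‖ ^ 2) := by
  obtain ⟨y, hy⟩ := hy
  have hx'_eq : x' = Finset.univ.centerMass (fun i => Real.exp (-‖x - q i‖ ^ 2)) p := hx'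
  refine Finset.univ.sum_exp_neg_le_of_sum_mul_le (a := fun i => ‖x - q i‖ ^ 2) ?_
  calc ∑ i, Real.exp (-‖x - q i‖ ^ 2) * ‖x' - p i‖ ^ 2
      ≤ ∑ i, Real.exp (-‖x - q i‖ ^ 2) * ‖y - p i‖ ^ 2 := by
        rw [hx'_eq]
        exact Finset.univ.sum_mul_norm_centerMass_sub_sq_le _ p (fun i _ => (Real.exp_pos _).le) y
    _ ≤ ∑ i, Real.exp (-‖x - q i‖ ^ 2) * ‖x - q i‖ ^ 2 := by
        gcongr with i
        exact hy i

theorem stmt_8 (n d m : ℕ) (hn : 1 ≤ n) (hd : 1 ≤ d) (hm : 1 ≤ m)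
    (p : Fin n → EuclideanSpace ℝ (Fin d)) (q : Fin n → EuclideanSpace ℝ (Fin m))
    (x : EuclideanSpace ℝ (Fin m))
    (hy : ∃ y : EuclideanSpace ℝ (Fin d), ∀ i, ‖y - p i‖ ≤ ‖x - q i‖)
    (x' : EuclideanSpace ℝ (Fin d))
    (hx' : x' = (∑ i, Real.exp (-‖x - q i‖ ^ 2))⁻¹ •
      ∑ i, Real.exp (-‖x - q i‖ ^ 2) • p i) :
    ∑ i, Real.exp (-‖x' - p i‖ ^ 2) ≥ ∑ i, Real.exp (-‖x - q i‖ ^ 2) :=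
  stmt_8_general n d m p q x hy x' hx'
end

section
/- (Truncated Taylor polynomial approximates a local Gaussian sum; truncation-error step of Lemma 2.3.) Let d ≥ 1, let ε, ρ > 0 with ερ ≤ 1/2, let r, r' > 0 with r + r' ≥ 1, set L = log(1/(ερ)) and s = ⌈(r+r')² e² log(d/(ερ))⌉. Let q ∈ ℝ^d, let Q be a finite set of points of ℝ^d with ‖p − q‖ ≤ r'·√L for every p ∈ Q, and let x ∈ ℝ^d with ‖x − q‖ ≤ r·√L. Then |Σ_{p∈Q} exp(−‖x−p‖²) − Σ_{p∈Q} T_s(x,p)| ≤ |Q| · ερ / 8. -/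
/-!
The Gaussian factorises over coordinates, `exp (-‖x - p‖²) = ∏ᵢ exp (-(xᵢ - pᵢ)²)`, and each factor
is approximated by its Taylor polynomial of degree `s - 1` in `(xᵢ - pᵢ)²` with error at most
`δ = M ^ s / s!`, where `M = (r + r')² L` bounds `‖x - p‖²`. Since the factors have absolute value
at most `1`, the product of the `d` approximations is off by at most `(1 + δ)ᵈ - 1 ≤ 2 d δ`.
The choice of `s` gives `e² M ≤ s`, hence `δ ≤ exp (-s)` because `sˢ / s! ≤ eˢ`,
and `5 log (d / ερ) ≤ s`, hence `d δ ≤ (ερ)⁵ ≤ ερ / 16`.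
-/

open Real Finset Nat

lemma abs_exp_sub_sum_range_le_of_nonpos {x : ℝ} (hx : x ≤ 0) (n : ℕ) :
    |exp x - ∑ j ∈ range n, x ^ j / j !| ≤ |x| ^ n / n ! := by
  rcases n with _ | n
  · simpa [abs_of_pos (exp_pos x)] using hx
  rcases hx.eq_or_lt with rfl | hx
  · simp [sum_range_succ']
  obtain ⟨ξ, hξ, hrem⟩ := taylor_mean_remainder_lagrange_iteratedDeriv (x₀ := 0) (n := n)
    hx.ne' contDiff_exp.contDiffOn
  have hcoeff (k : ℕ) : iteratedDerivWithin k exp (Set.uIcc 0 x) 0 = 1 := by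
    rw [iteratedDerivWithin_eq_iteratedDeriv (uniqueDiffOn_uIcc hx.ne') contDiff_exp.contDiffAt
      Set.left_mem_uIcc, iteratedDeriv_eq_iterate, iter_deriv_exp, exp_zero]
  simp only [taylor_within_apply, hcoeff, sub_zero, smul_eq_mul, mul_one,
    iteratedDeriv_eq_iterate, iter_deriv_exp] at hrem
  rw [Set.uIoo_of_ge hx.le] at hξ
  have hsum : ∑ k ∈ range (n + 1), (k ! : ℝ)⁻¹ * x ^ k = ∑ j ∈ range (n + 1), x ^ j / j ! := by
    simp only [div_eq_inv_mul]
  rw [← hsum, hrem, abs_div, abs_mul, abs_pow, abs_of_pos (exp_pos ξ), Nat.abs_cast]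
  gcongr
  exact mul_le_of_le_one_left (by positivity) (exp_le_one_iff.2 hξ.2.le)

lemma abs_prod_sub_prod_le {ι : Type*} (t : Finset ι) {a b : ι → ℝ} {δ : ℝ} (hδ : 0 ≤ δ)
    (ha : ∀ i ∈ t, |a i| ≤ 1) (hab : ∀ i ∈ t, |a i - b i| ≤ δ) :
    |∏ i ∈ t, a i - ∏ i ∈ t, b i| ≤ (1 + δ) ^ #t - 1 := by
  classical
  induction t using Finset.induction_on with
  | empty => simp
  | insert i t hi ih =>
    simp only [forall_mem_insert] at ha hab
    have hb : |∏ j ∈ t, b j| ≤ (1 + δ) ^ #t := by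
      rw [abs_prod, ← prod_const]
      refine prod_le_prod (fun j _ => abs_nonneg _) fun j hj => ?_
      calc |b j| ≤ |a j| + |a j - b j| := by simpa using abs_sub (a j) (a j - b j)
        _ ≤ 1 + δ := add_le_add (ha.2 j hj) (hab.2 j hj)
    rw [prod_insert hi, prod_insert hi, card_insert_of_notMem hi, pow_succ]
    calc |a i * ∏ j ∈ t, a j - b i * ∏ j ∈ t, b j|
        = |a i * (∏ j ∈ t, a j - ∏ j ∈ t, b j) + (a i - b i) * ∏ j ∈ t, b j| := by ring_nf
      _ ≤ |a i| * |∏ j ∈ t, a j - ∏ j ∈ t, b j| + |a i - b i| * |∏ j ∈ t, b j| := by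
        rw [← abs_mul, ← abs_mul]
        exact abs_add_le _ _
      _ ≤ 1 * ((1 + δ) ^ #t - 1) + δ * (1 + δ) ^ #t := by
        gcongr
        exacts [ha.1, ih ha.2 hab.2, hab.1]
      _ = (1 + δ) ^ #t * (1 + δ) - 1 := by ring

lemma one_add_pow_sub_one_le {δ : ℝ} {n : ℕ} (hδ : 0 ≤ δ) (h : n * δ ≤ 1) :
    (1 + δ) ^ n - 1 ≤ 2 * (n * δ) := by
  have hexp : (1 + δ) ^ n ≤ exp (n * δ) := by
    rw [exp_nat_mul]
    gcongr
    linarith [add_one_le_exp δ]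
  have := (abs_le.1 (abs_exp_sub_one_le (x := n * δ) (by rwa [abs_of_nonneg (by positivity)]))).2
  rw [abs_of_nonneg (by positivity)] at this
  linarith

lemma pow_div_factorial_le_exp_neg {M : ℝ} {s : ℕ} (hM : 0 ≤ M) (hs : exp 1 ^ 2 * M ≤ s) :
    M ^ s / s ! ≤ exp (-s) := by
  have hM' : M ≤ s * exp (-2) := by
    have he : exp 2 = exp 1 ^ 2 := by rw [← exp_nat_mul]; norm_num
    rw [exp_neg, he, ← div_eq_mul_inv, le_div_iff₀ (by positivity)]
    linarith
  calc M ^ s / s ! ≤ (s * exp (-2)) ^ s / s ! := by gcongr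
    _ = exp (-(2 * s)) * ((s : ℝ) ^ s / s !) := by
      rw [mul_pow, ← exp_nat_mul]; ring_nf
    _ ≤ exp (-(2 * s)) * exp s := by gcongr; exact pow_div_factorial_le_exp _ (by positivity) s
    _ = exp (-s) := by rw [← exp_add]; ring_nf

lemma natCast_mul_pow_div_factorial_le {d s : ℕ} {c K M : ℝ} (hd : 1 ≤ d) (hc0 : 0 < c)
    (hc : c ≤ 1 / 2) (hK : 1 ≤ K) (hM : 0 ≤ M) (hMK : M ≤ K * log (d / c))
    (hs : K * exp 1 ^ 2 * log (d / c) ≤ s) :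
    d * (M ^ s / s !) ≤ c / 16 := by
  have hd' : (1 : ℝ) ≤ d := by exact_mod_cast hd
  have hdc : 0 < (d : ℝ) / c := by positivity
  have hlog : 0 ≤ log (d / c) := log_nonneg (by rw [le_div_iff₀ hc0]; linarith)
  have hsM : exp 1 ^ 2 * M ≤ s := by
    nlinarith [mul_le_mul_of_nonneg_left hMK (by positivity : 0 ≤ exp 1 ^ 2)]
  have hsc : 5 * log (d / c) ≤ s := by
    have h5 : 5 ≤ K * exp 1 ^ 2 := by nlinarith [exp_one_gt_d9]
    nlinarith [mul_le_mul_of_nonneg_right h5 hlog]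
  have hc4 : c ^ 4 ≤ (1 / 2) ^ 4 := by gcongr
  calc d * (M ^ s / s !) ≤ d * exp (-s) := by gcongr; exact pow_div_factorial_le_exp_neg hM hsM
    _ ≤ d * exp ((5 : ℕ) * -log (d / c)) := by gcongr; push_cast; linarith
    _ = c ^ 5 / d ^ 4 := by
      rw [exp_nat_mul, exp_neg, exp_log hdc, inv_div]
      field_simp
    _ ≤ c ^ 5 := div_le_self (by positivity) (one_le_pow₀ hd')
    _ = c * c ^ 4 := by ring
    _ ≤ c / 16 := by nlinarith

lemma abs_exp_neg_norm_sq_sub_prod_le {ι : Type*} [Fintype ι] {x p : EuclideanSpace ℝ ι}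
    {M : ℝ} (hM : ‖x - p‖ ^ 2 ≤ M) (s : ℕ) :
    |exp (-‖x - p‖ ^ 2) - ∏ i, ∑ j ∈ range s, (-(x i - p i) ^ 2) ^ j / j !| ≤
      (1 + M ^ s / s !) ^ Fintype.card ι - 1 := by
  have hM0 : 0 ≤ M := (sq_nonneg _).trans hM
  have hfactor : exp (-‖x - p‖ ^ 2) = ∏ i, exp (-(x i - p i) ^ 2) := by
    simp [EuclideanSpace.norm_sq_eq, ← exp_sum, sum_neg_distrib]
  rw [hfactor, ← Finset.card_univ]
  refine abs_prod_sub_prod_le univ (by positivity) (fun i _ => ?_) fun i _ => ?_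
  · rw [abs_of_pos (exp_pos _), exp_le_one_iff, neg_nonpos]
    positivity
  · have hcoord : (x i - p i) ^ 2 ≤ ‖x - p‖ ^ 2 := by
      simpa using pow_le_pow_left₀ (norm_nonneg _) (PiLp.norm_apply_le (x - p) i) 2
    calc _ ≤ |-(x i - p i) ^ 2| ^ s / s ! :=
          abs_exp_sub_sum_range_le_of_nonpos (neg_nonpos.2 (sq_nonneg _)) s
      _ ≤ M ^ s / s ! := by
          rw [abs_neg, abs_sq]
          gcongr
          exact hcoord.trans hM

theorem stmt_11_general (d : ℕ) (hd : 1 ≤ d) (ε ρ : ℝ) (hε : 0 < ε) (hρ : 0 < ρ)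
    (hερ : ε * ρ ≤ 1 / 2) (r r' : ℝ) (hrr' : 1 ≤ r + r')
    (L : ℝ) (hL : L = Real.log (1 / (ε * ρ)))
    (s : ℕ) (hs : s = ⌈(r + r') ^ 2 * Real.exp 1 ^ 2 * Real.log (d / (ε * ρ))⌉₊)
    (q : EuclideanSpace ℝ (Fin d)) (Q : Finset (EuclideanSpace ℝ (Fin d)))
    (hQ : ∀ p ∈ Q, ‖p - q‖ ≤ r' * Real.sqrt L)
    (x : EuclideanSpace ℝ (Fin d)) (hx : ‖x - q‖ ≤ r * Real.sqrt L) :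
    |∑ p ∈ Q, Real.exp (-‖x - p‖ ^ 2) -
        ∑ p ∈ Q, ∏ i, ∑ j ∈ Finset.range s, (-(x i - p i) ^ 2) ^ j / (Nat.factorial j : ℝ)| ≤
      Q.card * ε * ρ / 8 := by
  have hc0 : 0 < ε * ρ := mul_pos hε hρ
  have hL0 : 0 ≤ L := hL ▸ log_nonneg (by rw [le_div_iff₀ hc0]; linarith)
  have hLd : L ≤ log (d / (ε * ρ)) :=
    hL ▸ log_le_log (by positivity) (by gcongr; exact_mod_cast hd)
  have hδ := natCast_mul_pow_div_factorial_le (M := (r + r') ^ 2 * L) hd hc0 hερ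
    (one_le_pow₀ hrr') (by positivity) (by gcongr) (hs ▸ Nat.le_ceil _)
  have hpoint (p : EuclideanSpace ℝ (Fin d)) (hp : p ∈ Q) :
      |exp (-‖x - p‖ ^ 2) - ∏ i, ∑ j ∈ range s, (-(x i - p i) ^ 2) ^ j / j !| ≤ ε * ρ / 8 := by
    have hxp : ‖x - p‖ ≤ (r + r') * √L := by
      calc ‖x - p‖ ≤ ‖x - q‖ + ‖p - q‖ := norm_sub_rev p q ▸ norm_sub_le_norm_sub_add_norm_sub _ _ _
        _ ≤ (r + r') * √L := by linarith [hQ p hp]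
    have hxp2 : ‖x - p‖ ^ 2 ≤ (r + r') ^ 2 * L := by
      simpa [mul_pow, sq_sqrt hL0] using pow_le_pow_left₀ (norm_nonneg _) hxp 2
    calc _ ≤ (1 + ((r + r') ^ 2 * L) ^ s / s !) ^ d - 1 := by
          simpa using abs_exp_neg_norm_sq_sub_prod_le hxp2 s
      _ ≤ 2 * (d * (((r + r') ^ 2 * L) ^ s / s !)) :=
          one_add_pow_sub_one_le (by positivity) (by linarith)
      _ ≤ ε * ρ / 8 := by linarith
  calc _ = |∑ p ∈ Q, (exp (-‖x - p‖ ^ 2) -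
          ∏ i, ∑ j ∈ range s, (-(x i - p i) ^ 2) ^ j / j !)| := by rw [sum_sub_distrib]
    _ ≤ ∑ p ∈ Q, |exp (-‖x - p‖ ^ 2) - ∏ i, ∑ j ∈ range s, (-(x i - p i) ^ 2) ^ j / j !| :=
        abs_sum_le_sum_abs _ _
    _ ≤ ∑ _p ∈ Q, ε * ρ / 8 := sum_le_sum hpoint
    _ = Q.card * ε * ρ / 8 := by rw [sum_const, nsmul_eq_mul]; ring

theorem stmt_11 (d : ℕ) (hd : 1 ≤ d) (ε ρ : ℝ) (hε : 0 < ε) (hρ : 0 < ρ)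
    (hερ : ε * ρ ≤ 1 / 2) (r r' : ℝ) (hr : 0 < r) (hr' : 0 < r') (hrr' : 1 ≤ r + r')
    (L : ℝ) (hL : L = Real.log (1 / (ε * ρ)))
    (s : ℕ) (hs : s = ⌈(r + r') ^ 2 * Real.exp 1 ^ 2 * Real.log (d / (ε * ρ))⌉₊)
    (q : EuclideanSpace ℝ (Fin d)) (Q : Finset (EuclideanSpace ℝ (Fin d)))
    (hQ : ∀ p ∈ Q, ‖p - q‖ ≤ r' * Real.sqrt L)
    (x : EuclideanSpace ℝ (Fin d)) (hx : ‖x - q‖ ≤ r * Real.sqrt L) :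
    |∑ p ∈ Q, Real.exp (-‖x - p‖ ^ 2) -
        ∑ p ∈ Q, ∏ i, ∑ j ∈ Finset.range s, (-(x i - p i) ^ 2) ^ j / (Nat.factorial j : ℝ)| ≤
      Q.card * ε * ρ / 8 :=
  stmt_11_general d hd ε ρ hε hρ hερ r r' hrr' L hL s hs q Q hQ x hx
end

section
/- (Per-point rectangle approximation of the 2-D Gaussian kernel; core of Lemma 5.1.) Let m ≥ 1 be an integer and let p = (p₁,p₂), x = (x₁,x₂) ∈ ℝ². Define N_p(x) to be the number of pairs (a₁,a₂) ∈ {0,1,…,m−1}² such that exp(−(x₁−p₁)²) ≥ 1 − a₁/m and exp(−(x₂−p₂)²) ≥ 1 − a₂/m. Then exp(−‖x−p‖²) ≥ N_p(x)/m² ≥ exp(−‖x−p‖²) − 2/m. -/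
open scoped BigOperators Classical

lemma count_aux (m : ℕ) (hm : 1 ≤ m) (t : ℝ) (ht0 : 0 < t) (ht1 : t ≤ 1) :
    ((((Finset.range m).filter (fun a : ℕ => t ≥ 1 - (a : ℝ) / m)).card : ℝ) ≤ m * t) ∧
    (m * t - 1 ≤ (((Finset.range m).filter (fun a : ℕ => t ≥ 1 - (a : ℝ) / m)).card : ℝ)) := by
  have hmpos : (0:ℝ) < m := by exact_mod_cast hm
  set s : ℝ := (m : ℝ) * (1 - t) with hs
  have hs0 : 0 ≤ s := mul_nonneg (le_of_lt hmpos) (by linarith)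
  have hk0 : (0:ℤ) ≤ ⌈s⌉ := Int.ceil_nonneg hs0
  set k : ℕ := ⌈s⌉.toNat with hk
  have hkR : (k : ℝ) = (⌈s⌉ : ℝ) := by
    rw [hk]; exact_mod_cast Int.toNat_of_nonneg hk0
  have hks1 : (k : ℝ) - 1 < s := by
    have := Int.ceil_lt_add_one s; linarith [hkR]
  have hks2 : s ≤ (k : ℝ) := by rw [hkR]; exact Int.le_ceil s
  have hslt : s < (m:ℝ) := by
    have : (m:ℝ) * (1 - t) < m * 1 := by
      apply mul_lt_mul_of_pos_left _ hmpos; linarith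
    simpa [hs] using this
  have hkm : k ≤ m := by
    by_contra h
    push_neg at h
    have : (m:ℝ) + 1 ≤ (k:ℝ) := by exact_mod_cast h
    linarith
  have hfe : (Finset.range m).filter (fun a : ℕ => t ≥ 1 - (a : ℝ) / m)
      = Finset.Ico k m := by
    ext a
    simp only [Finset.mem_filter, Finset.mem_range, Finset.mem_Ico]
    constructor
    · rintro ⟨ham, hcond⟩
      refine ⟨?_, ham⟩
      have hsa : s ≤ (a : ℝ) := by
        have h1 : 1 - t ≤ (a : ℝ) / m := by linarith
        calc s = (m:ℝ) * (1 - t) := hs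
          _ ≤ (m:ℝ) * ((a:ℝ)/m) := by
              exact mul_le_mul_of_nonneg_left h1 (le_of_lt hmpos)
          _ = a := by field_simp
      have hca : (⌈s⌉ : ℝ) ≤ (a : ℝ) := by
        have := Int.ceil_le.mpr (show s ≤ ((a:ℤ):ℝ) by exact_mod_cast hsa)
        exact_mod_cast this
      have : ⌈s⌉ ≤ (a : ℤ) := by exact_mod_cast hca
      omega
    · rintro ⟨hka, ham⟩
      refine ⟨ham, ?_⟩
      have hka' : (k : ℝ) ≤ a := by exact_mod_cast hka
      have hsa : (m:ℝ) * (1 - t) ≤ (a : ℝ) := by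
        rw [← hs]; exact le_trans hks2 hka'
      rw [ge_iff_le, sub_le_iff_le_add, ← sub_le_iff_le_add', le_div_iff₀ hmpos]
      nlinarith
  rw [hfe, Nat.card_Ico]
  have hcast : ((m - k : ℕ) : ℝ) = (m : ℝ) - k := by
    push_cast [hkm]; ring
  rw [hcast]
  constructor <;> nlinarith

theorem stmt_13 (m : ℕ) (hm : 1 ≤ m) (p x : ℝ × ℝ)
    (N : ℕ)
    (hN : N = (((Finset.range m) ×ˢ (Finset.range m)).filter (fun a =>
      Real.exp (-(x.1 - p.1) ^ 2) ≥ 1 - (a.1 : ℝ) / m ∧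
      Real.exp (-(x.2 - p.2) ^ 2) ≥ 1 - (a.2 : ℝ) / m)).card) :
    Real.exp (-((x.1 - p.1) ^ 2 + (x.2 - p.2) ^ 2)) ≥ (N : ℝ) / m ^ 2 ∧
      (N : ℝ) / m ^ 2 ≥ Real.exp (-((x.1 - p.1) ^ 2 + (x.2 - p.2) ^ 2)) - 2 / m := by
  have hmpos : (0:ℝ) < m := by exact_mod_cast hm
  set t1 := Real.exp (-(x.1 - p.1) ^ 2) with ht1d
  set t2 := Real.exp (-(x.2 - p.2) ^ 2) with ht2d
  have ht10 : 0 < t1 := Real.exp_pos _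
  have ht20 : 0 < t2 := Real.exp_pos _
  have ht11 : t1 ≤ 1 := Real.exp_le_one_iff.mpr (neg_nonpos.mpr (sq_nonneg _))
  have ht21 : t2 ≤ 1 := Real.exp_le_one_iff.mpr (neg_nonpos.mpr (sq_nonneg _))
  have hprod : ((Finset.range m) ×ˢ (Finset.range m)).filter (fun a : ℕ × ℕ =>
      t1 ≥ 1 - (a.1 : ℝ) / m ∧ t2 ≥ 1 - (a.2 : ℝ) / m)
      = ((Finset.range m).filter (fun a : ℕ => t1 ≥ 1 - (a : ℝ) / m)) ×ˢ
        ((Finset.range m).filter (fun a : ℕ => t2 ≥ 1 - (a : ℝ) / m)) := by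
    ext a
    simp only [Finset.mem_filter, Finset.mem_product]
    tauto
  set c1 := ((Finset.range m).filter (fun a : ℕ => t1 ≥ 1 - (a : ℝ) / m)).card with hc1
  set c2 := ((Finset.range m).filter (fun a : ℕ => t2 ≥ 1 - (a : ℝ) / m)).card with hc2
  have hNcc : N = c1 * c2 := by
    rw [hN, hprod, Finset.card_product]
  obtain ⟨h1u, h1l⟩ := count_aux m hm t1 ht10 ht11
  obtain ⟨h2u, h2l⟩ := count_aux m hm t2 ht20 ht21
  rw [← hc1] at h1u h1l
  rw [← hc2] at h2u h2l
  have hexp : Real.exp (-((x.1 - p.1) ^ 2 + (x.2 - p.2) ^ 2)) = t1 * t2 := by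
    rw [ht1d, ht2d, ← Real.exp_add]; ring_nf
  have hc10 : (0:ℝ) ≤ c1 := Nat.cast_nonneg _
  have hc20 : (0:ℝ) ≤ c2 := Nat.cast_nonneg _
  have hNR : (N : ℝ) = (c1 : ℝ) * c2 := by rw [hNcc]; push_cast; ring
  rw [hexp, hNR]
  have hm2 : (0:ℝ) < (m:ℝ)^2 := by positivity
  have hc2m : (c2:ℝ) ≤ m := by nlinarith
  have hA : (m:ℝ)*t1*((m:ℝ)*t2 - c2) ≤ (m:ℝ)*t1*1 :=
    mul_le_mul_of_nonneg_left (by linarith) (by positivity)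
  have hB : ((m:ℝ)*t1 - c1)*c2 ≤ 1*c2 :=
    mul_le_mul_of_nonneg_right (by linarith) hc20
  have h2m : (2/(m:ℝ))*(m:ℝ)^2 = 2*m := by field_simp
  constructor
  · rw [ge_iff_le, div_le_iff₀ hm2]
    nlinarith [mul_le_mul h1u h2u hc20 (by positivity : (0:ℝ) ≤ (m:ℝ)*t1)]
  · rw [ge_iff_le, ← sub_nonneg]
    have key : (t1*t2 - 2/m) * (m:ℝ)^2 ≤ (c1:ℝ)*c2 := by nlinarith
    have : (t1*t2 - 2/m) ≤ (c1:ℝ)*c2/(m:ℝ)^2 := by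
      rw [← le_div_iff₀ hm2] at key; exact key
    linarith
end

section
/- (Lemma 5.1: depth in the rectangle family approximates the KDE.) Let n ≥ 1, let p₁,…,pₙ ∈ ℝ², let ε, ρ > 0 with ερ ≤ 1, set m = ⌈6/(ερ)⌉, and for x ∈ ℝ² let N(x) = Σ_{k=1}^n N_{p_k}(x), where N_{p}(x) is the number of pairs (a₁,a₂) ∈ {0,…,m−1}² with exp(−(x₁−p₁)²) ≥ 1 − a₁/m and exp(−(x₂−p₂)²) ≥ 1 − a₂/m. Then for every x ∈ ℝ²: Ḡ_P(x) ≥ N(x)/(n m²) ≥ Ḡ_P(x) − ερ/3. -/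
open scoped BigOperators Classical

lemma count_bounds (m : ℕ) (hm : 0 < m) (g : ℝ) (hg0 : 0 ≤ g) (hg1 : g ≤ 1) :
    (m : ℝ) * g - 1 ≤ (((Finset.range m).filter (fun a : ℕ => g ≥ 1 - (a : ℝ) / m)).card : ℝ) ∧
    ((((Finset.range m).filter (fun a : ℕ => g ≥ 1 - (a : ℝ) / m)).card : ℝ)) ≤ m * g := by
  have hmR : (0:ℝ) < m := by exact_mod_cast hm
  set c₀ : ℕ := ⌈(m:ℝ) - m * g⌉₊ with hc₀
  have hle : c₀ ≤ m := by
    rw [hc₀, Nat.ceil_le]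
    nlinarith
  have hfil : (Finset.range m).filter (fun a : ℕ => g ≥ 1 - (a : ℝ) / m) = Finset.Ico c₀ m := by
    ext a
    simp only [Finset.mem_filter, Finset.mem_range, Finset.mem_Ico, ge_iff_le, hc₀, Nat.ceil_le]
    constructor
    · rintro ⟨h1, h2⟩
      have := (le_div_iff₀ hmR).mp (by linarith : 1 - g ≤ (a:ℝ)/m)
      exact ⟨by nlinarith, h1⟩
    · rintro ⟨h1, h2⟩
      refine ⟨h2, ?_⟩
      have : 1 - g ≤ (a:ℝ)/m := (le_div_iff₀ hmR).mpr (by nlinarith)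
      linarith
  rw [hfil, Nat.card_Ico, Nat.cast_sub hle]
  have h1 : (m:ℝ) - m * g ≤ c₀ := Nat.le_ceil _
  have h2 : (c₀ : ℝ) < (m - m*g) + 1 := Nat.ceil_lt_add_one (by nlinarith)
  constructor <;> linarith

lemma prod_bounds (M g1 g2 C1 C2 : ℝ) (hM : 0 < M)
    (hg10 : 0 ≤ g1) (hg11 : g1 ≤ 1) (hg20 : 0 ≤ g2) (hg21 : g2 ≤ 1)
    (hl1 : M * g1 - 1 ≤ C1) (hu1 : C1 ≤ M * g1)
    (hl2 : M * g2 - 1 ≤ C2) (hu2 : C2 ≤ M * g2)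
    (hC10 : 0 ≤ C1) (hC20 : 0 ≤ C2) :
    M ^ 2 * (g1 * g2) - 2 * M ≤ C1 * C2 ∧ C1 * C2 ≤ M ^ 2 * (g1 * g2) := by
  have hmg1 : M * g1 ≤ M := by nlinarith
  have hmg2 : M * g2 ≤ M := by nlinarith
  have hc1m : C1 ≤ M := le_trans hu1 hmg1
  constructor
  · have key : M ^ 2 * (g1 * g2) - C1 * C2
        = (M * g2) * (M * g1 - C1) + C1 * (M * g2 - C2) := by ring
    have b1 : (M * g2) * (M * g1 - C1) ≤ M * 1 :=
      mul_le_mul hmg2 (by linarith) (by linarith) hM.le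
    have b2 : C1 * (M * g2 - C2) ≤ M * 1 :=
      mul_le_mul hc1m (by linarith) (by linarith) hM.le
    linarith
  · calc C1 * C2 ≤ (M * g1) * (M * g2) :=
          mul_le_mul hu1 hu2 hC20 (mul_nonneg hM.le hg10)
      _ = M ^ 2 * (g1 * g2) := by ring

theorem stmt_14 (n : ℕ) (hn : 1 ≤ n) (p : Fin n → ℝ × ℝ)
    (ε ρ : ℝ) (hε : 0 < ε) (hρ : 0 < ρ) (hερ : ε * ρ ≤ 1)
    (m : ℕ) (hm : m = ⌈6 / (ε * ρ)⌉₊)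
    (N : (ℝ × ℝ) → ℕ)
    (hN : ∀ x : ℝ × ℝ, N x = ∑ k, (((Finset.range m) ×ˢ (Finset.range m)).filter (fun a =>
      Real.exp (-(x.1 - (p k).1) ^ 2) ≥ 1 - (a.1 : ℝ) / m ∧
      Real.exp (-(x.2 - (p k).2) ^ 2) ≥ 1 - (a.2 : ℝ) / m)).card) :
    ∀ x : ℝ × ℝ,
      (1 / n) * ∑ k, Real.exp (-((x.1 - (p k).1) ^ 2 + (x.2 - (p k).2) ^ 2)) ≥
          (N x : ℝ) / (n * m ^ 2) ∧
        (N x : ℝ) / (n * m ^ 2) ≥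
          (1 / n) * (∑ k, Real.exp (-((x.1 - (p k).1) ^ 2 + (x.2 - (p k).2) ^ 2))) -
            ε * ρ / 3 := by
  have hερ0 : 0 < ε * ρ := mul_pos hε hρ
  have hm6 : (6 : ℝ) / (ε * ρ) ≤ m := hm ▸ Nat.le_ceil _
  have hmpos : 0 < m := by
    rw [hm, Nat.ceil_pos]
    positivity
  have hmR : (0:ℝ) < m := by exact_mod_cast hmpos
  have hnR : (0:ℝ) < n := by exact_mod_cast hn
  have h2m : 2 / (m:ℝ) ≤ ε * ρ / 3 := by
    rw [div_le_div_iff₀ hmR (by norm_num)]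
    rw [div_le_iff₀ hερ0] at hm6
    nlinarith
  intro x
  set g1 : Fin n → ℝ := fun k => Real.exp (-(x.1 - (p k).1) ^ 2) with hg1
  set g2 : Fin n → ℝ := fun k => Real.exp (-(x.2 - (p k).2) ^ 2) with hg2
  set c1 : Fin n → ℕ := fun k =>
    ((Finset.range m).filter (fun a : ℕ => g1 k ≥ 1 - (a : ℝ) / m)).card with hc1
  set c2 : Fin n → ℕ := fun k =>
    ((Finset.range m).filter (fun a : ℕ => g2 k ≥ 1 - (a : ℝ) / m)).card with hc2
  set G : Fin n → ℝ := fun k => Real.exp (-((x.1 - (p k).1) ^ 2 + (x.2 - (p k).2) ^ 2)) with hG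
  have hGk : ∀ k, G k = g1 k * g2 k := by
    intro k
    rw [hG, hg1, hg2]
    simp only
    rw [← Real.exp_add]
    ring_nf
  have hg1b : ∀ k, 0 ≤ g1 k ∧ g1 k ≤ 1 := fun k =>
    ⟨Real.exp_nonneg _, Real.exp_le_one_iff.mpr (by nlinarith [sq_nonneg (x.1 - (p k).1)])⟩
  have hg2b : ∀ k, 0 ≤ g2 k ∧ g2 k ≤ 1 := fun k =>
    ⟨Real.exp_nonneg _, Real.exp_le_one_iff.mpr (by nlinarith [sq_nonneg (x.2 - (p k).2)])⟩
  have hc1b : ∀ k, (m:ℝ) * g1 k - 1 ≤ c1 k ∧ (c1 k : ℝ) ≤ m * g1 k := fun k =>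
    count_bounds m hmpos (g1 k) (hg1b k).1 (hg1b k).2
  have hc2b : ∀ k, (m:ℝ) * g2 k - 1 ≤ c2 k ∧ (c2 k : ℝ) ≤ m * g2 k := fun k =>
    count_bounds m hmpos (g2 k) (hg2b k).1 (hg2b k).2
  have hNx : (N x : ℝ) = ∑ k, (c1 k : ℝ) * (c2 k : ℝ) := by
    rw [hN x]
    push_cast
    refine Finset.sum_congr rfl fun k _ => ?_
    have he : ((Finset.range m) ×ˢ (Finset.range m)).filter (fun a : ℕ × ℕ =>
        Real.exp (-(x.1 - (p k).1) ^ 2) ≥ 1 - (a.1 : ℝ) / m ∧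
        Real.exp (-(x.2 - (p k).2) ^ 2) ≥ 1 - (a.2 : ℝ) / m) =
        ((Finset.range m).filter (fun a : ℕ => g1 k ≥ 1 - (a : ℝ) / m)) ×ˢ
        ((Finset.range m).filter (fun a : ℕ => g2 k ≥ 1 - (a : ℝ) / m)) := by
      ext a
      simp only [Finset.mem_filter, Finset.mem_product, hg1, hg2]
      tauto
    rw [he, Finset.card_product, hc1, hc2]
    push_cast
    ring
  have hkey : ∀ k : Fin n,
      (m:ℝ)^2 * G k - 2 * m ≤ (c1 k : ℝ) * (c2 k : ℝ) ∧
      (c1 k : ℝ) * (c2 k : ℝ) ≤ (m:ℝ)^2 * G k := by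
    intro k
    rw [hGk k]
    exact prod_bounds m (g1 k) (g2 k) (c1 k) (c2 k) hmR (hg1b k).1 (hg1b k).2
      (hg2b k).1 (hg2b k).2 (hc1b k).1 (hc1b k).2 (hc2b k).1 (hc2b k).2
      (Nat.cast_nonneg _) (Nat.cast_nonneg _)
  clear_value c1 c2 g1 g2 G
  set S := ∑ k, (c1 k : ℝ) * (c2 k : ℝ) with hS
  have hsum1 : S ≤ (m:ℝ)^2 * ∑ k, G k := by
    rw [Finset.mul_sum]
    exact Finset.sum_le_sum fun k _ => (hkey k).2
  have hsum2 : (m:ℝ)^2 * (∑ k, G k) - 2 * m * n ≤ S := by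
    have h := Finset.sum_le_sum (fun k (_ : k ∈ Finset.univ) => (hkey k).1)
    rw [Finset.sum_sub_distrib, ← Finset.mul_sum, Finset.sum_const, Finset.card_univ,
      Fintype.card_fin, nsmul_eq_mul] at h
    rw [hS]
    linarith
  rw [hNx]
  set T := ∑ k, G k with hT
  have e1 : (1:ℝ)/n * T = ((m:ℝ)^2 * T) / (n * m^2) := by
    field_simp
  have e2 : ((m:ℝ)^2 * T) / (n * m^2) - ((m:ℝ)^2 * T - 2*m*n) / (n * m^2) = 2 / m := by
    field_simp
    ring
  have e3 : ((m:ℝ)^2 * T - 2*m*n) / (n * m^2) ≤ S / (n * m^2) := by gcongr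
  constructor
  · rw [ge_iff_le, e1]
    gcongr
  · rw [ge_iff_le, e1]
    linarith
end
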